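/- Let G be a graph obtained from two vertex-disjoint graphs G₁, G₂ by adding k edges e₁, ..., e_k, each joining a vertex of G₁ to a vertex of G₂, where k ≥ 1. Suppose every simple cycle of G₁ has s₁-sum 0 and every simple cycle of G₂ has s₂-sum 0 for given labelings s₁, s₂ into ℤ/2ℤ. Then there exists an extension s of s₁ and s₂ to all of E(G) such that every element of the cycle space of G has s-sum 0. -/

import Mathlib

/-!
A `ZMod 2`-labeling of the edges kills every simple cycle exactly when it is a coboundary
`s(a, b) ↦ φ a + φ b` of a vertex potential `φ`: shortcutting a closed walk to a path only removes
closed subwalks that close up a path with one edge, and these are simple cycles or an edge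
traversed twice. Potentials `φ₁`, `φ₂` of `s₁`, `s₂` then combine to a potential `φ₁ ⊕ φ₂` on `G`
once every connecting edge `a b` gets the label `φ₁ a + φ₂ b`, and coboundaries kill every cycle,
hence the whole cycle space.
-/

/-- The cycle space of `G` over `ZMod 2`: the span, inside the edge space, of
the edge-set indicator functions of the simple cycles of `G`. -/
def cycleSpace {V : Type*} [DecidableEq V] (G : SimpleGraph V) :
    Submodule (ZMod 2) (Sym2 V → ZMod 2) :=
  Submodule.span (ZMod 2)
    {f | ∃ (v : V) (w : G.Walk v v), w.IsCycle ∧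
      f = fun e => if e ∈ w.edges then 1 else 0}

namespace SimpleGraph

open Walk

variable {V : Type*} {G : SimpleGraph V} {s : Sym2 V → ZMod 2}

def AnnihilatesCycles [DecidableEq V] (G : SimpleGraph V) (s : Sym2 V → ZMod 2) : Prop :=
  ∀ (v : V) (w : G.Walk v v), w.IsCycle → ∑ e ∈ w.edges.toFinset, s e = 0

namespace AnnihilatesCycles

variable [DecidableEq V] (hs : G.AnnihilatesCycles s)
include hs

lemma sum_edges_cons_eq_zero_of_isPath {u v : V} (h : G.Adj u v) {q : G.Walk v u}
    (hq : q.IsPath) : ((cons h q).edges.map s).sum = 0 := by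
  by_cases he : s(u, v) ∈ q.edges
  · -- then `q` is that single edge, traversed back
    rw [hq.eq_adj_toWalk_of_mem_edges (Sym2.eq_swap ▸ he)]
    simp [Sym2.eq_swap, CharTwo.add_self_eq_zero]
  · have hc := (cons_isCycle_iff q h).2 ⟨hq, he⟩
    rw [← List.sum_toFinset _ hc.edges_nodup]
    exact hs u _ hc

lemma sum_edges_bypass {u v : V} (w : G.Walk u v) :
    (w.bypass.edges.map s).sum = (w.edges.map s).sum := by
  induction w with
  | nil => rfl
  | @cons u v w h p ih =>
    rw [bypass]
    split_ifs with hu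
    · have hsplit := congrArg (fun q => (q.edges.map s).sum) (p.bypass.take_spec hu)
      have hloop := hs.sum_edges_cons_eq_zero_of_isPath h (p.bypass_isPath.takeUntil hu)
      simp only [edges_append, edges_cons, List.map_append, List.map_cons, List.sum_append,
        List.sum_cons, ih] at hsplit hloop ⊢
      grind
    · simp [ih]

lemma sum_edges_eq_zero {v : V} (w : G.Walk v v) : (w.edges.map s).sum = 0 := by
  rw [← hs.sum_edges_bypass, eq_nil_iff_nil.mpr (isPath_iff_nil.mp w.bypass_isPath)]
  rfl

lemma sum_edges_eq {u v : V} (w₁ w₂ : G.Walk u v) :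
    (w₁.edges.map s).sum = (w₂.edges.map s).sum := by
  have h := hs.sum_edges_eq_zero (w₁.append w₂.reverse)
  simp only [edges_append, edges_reverse, List.map_append, List.map_reverse, List.sum_append,
    List.sum_reverse] at h
  grind

lemma exists_potential : ∃ φ : V → ZMod 2, ∀ a b, G.Adj a b → s s(a, b) = φ a + φ b := by
  have hroot (a : V) : G.Reachable (G.connectedComponentMk a).out a :=
    ConnectedComponent.exact (G.connectedComponentMk a).out_eq
  refine ⟨fun a => ((hroot a).some.edges.map s).sum, fun a b hab => ?_⟩
  have hsame : (G.connectedComponentMk a).out = (G.connectedComponentMk b).out := by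
    rw [ConnectedComponent.connectedComponentMk_eq_of_adj hab]
  have h := hs.sum_edges_eq ((hroot a).some.concat hab) ((hroot b).some.copy hsame.symm rfl)
  simp only [edges_concat, edges_copy, List.map_concat, List.sum_concat] at h
  grind

end AnnihilatesCycles

lemma sum_edges_eq_of_potential {φ : V → ZMod 2} (hφ : ∀ a b, G.Adj a b → s s(a, b) = φ a + φ b)
    {u v : V} (w : G.Walk u v) : (w.edges.map s).sum = φ u + φ v := by
  induction w with
  | nil => simp [CharTwo.add_self_eq_zero]
  | @cons a b c h p ih =>
    simp only [edges_cons, List.map_cons, List.sum_cons, ih, hφ a b h]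
    grind

lemma annihilatesCycles_iff_exists_potential [DecidableEq V] :
    G.AnnihilatesCycles s ↔ ∃ φ : V → ZMod 2, ∀ a b, G.Adj a b → s s(a, b) = φ a + φ b := by
  refine ⟨AnnihilatesCycles.exists_potential, fun ⟨φ, hφ⟩ v w hw => ?_⟩
  rw [List.sum_toFinset _ hw.edges_nodup, sum_edges_eq_of_potential hφ]
  exact CharTwo.add_self_eq_zero _

lemma AnnihilatesCycles.sum_mul_eq_zero [Fintype V] [DecidableEq V]
    (hs : G.AnnihilatesCycles s) {Z : Sym2 V → ZMod 2} (hZ : Z ∈ cycleSpace G) :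
    ∑ e, Z e * s e = 0 := by
  induction hZ using Submodule.span_induction with
  | mem Z hZ =>
    obtain ⟨v, w, hw, rfl⟩ := hZ
    simp only [ite_mul, one_mul, zero_mul]
    rw [← Finset.sum_filter, ← hs v w hw]
    congr 1
    ext
    simp
  | zero => simp
  | add Z W _ _ hZ hW => simp [add_mul, Finset.sum_add_distrib, hZ, hW]
  | smul c Z _ hZ => simp [mul_assoc, ← Finset.mul_sum, hZ]

end SimpleGraph

section SumLabel

variable {V₁ V₂ R : Type*} [AddCommMonoid R]

def sumEdgeLabel (s₁ : Sym2 V₁ → R) (s₂ : Sym2 V₂ → R) (φ₁ : V₁ → R) (φ₂ : V₂ → R) :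
    Sym2 (V₁ ⊕ V₂) → R :=
  Sym2.lift ⟨fun
    | .inl a, .inl b => s₁ s(a, b)
    | .inr a, .inr b => s₂ s(a, b)
    | .inl a, .inr b => φ₁ a + φ₂ b
    | .inr a, .inl b => φ₁ b + φ₂ a, by rintro (a | a) (b | b) <;> simp [Sym2.eq_swap]⟩

variable {s₁ : Sym2 V₁ → R} {s₂ : Sym2 V₂ → R} {φ₁ : V₁ → R} {φ₂ : V₂ → R}

lemma sumEdgeLabel_map_inl (e : Sym2 V₁) :
    sumEdgeLabel s₁ s₂ φ₁ φ₂ (e.map Sum.inl) = s₁ e := by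
  induction e using Sym2.ind
  rfl

lemma sumEdgeLabel_map_inr (e : Sym2 V₂) :
    sumEdgeLabel s₁ s₂ φ₁ φ₂ (e.map Sum.inr) = s₂ e := by
  induction e using Sym2.ind
  rfl

lemma sumEdgeLabel_eq_of_adj {G₁ : SimpleGraph V₁} {G₂ : SimpleGraph V₂}
    {G : SimpleGraph (V₁ ⊕ V₂)}
    (hadj₁ : ∀ a b : V₁, G.Adj (Sum.inl a) (Sum.inl b) ↔ G₁.Adj a b)
    (hadj₂ : ∀ a b : V₂, G.Adj (Sum.inr a) (Sum.inr b) ↔ G₂.Adj a b)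
    (hφ₁ : ∀ a b, G₁.Adj a b → s₁ s(a, b) = φ₁ a + φ₁ b)
    (hφ₂ : ∀ a b, G₂.Adj a b → s₂ s(a, b) = φ₂ a + φ₂ b) {x y : V₁ ⊕ V₂} (h : G.Adj x y) :
    sumEdgeLabel s₁ s₂ φ₁ φ₂ s(x, y) = Sum.elim φ₁ φ₂ x + Sum.elim φ₁ φ₂ y := by
  rcases x with a | a <;> rcases y with b | b
  · exact hφ₁ a b ((hadj₁ a b).1 h)
  · rfl
  · exact add_comm _ _
  · exact hφ₂ a b ((hadj₂ a b).1 h)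

end SumLabel

theorem stmt_8_general {V₁ V₂ : Type*} [Fintype V₁] [Fintype V₂]
    [DecidableEq V₁] [DecidableEq V₂]
    (G₁ : SimpleGraph V₁) (G₂ : SimpleGraph V₂)
    (G : SimpleGraph (V₁ ⊕ V₂))
    (hadj₁ : ∀ a b : V₁, G.Adj (Sum.inl a) (Sum.inl b) ↔ G₁.Adj a b)
    (hadj₂ : ∀ a b : V₂, G.Adj (Sum.inr a) (Sum.inr b) ↔ G₂.Adj a b)
    (s₁ : Sym2 V₁ → ZMod 2) (s₂ : Sym2 V₂ → ZMod 2)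
    (hs₁ : ∀ (v : V₁) (w : G₁.Walk v v), w.IsCycle →
      ∑ e ∈ w.edges.toFinset, s₁ e = 0)
    (hs₂ : ∀ (v : V₂) (w : G₂.Walk v v), w.IsCycle →
      ∑ e ∈ w.edges.toFinset, s₂ e = 0) :
    ∃ s : Sym2 (V₁ ⊕ V₂) → ZMod 2,
      (∀ e : Sym2 V₁, s (Sym2.map Sum.inl e) = s₁ e) ∧
      (∀ e : Sym2 V₂, s (Sym2.map Sum.inr e) = s₂ e) ∧
      ∀ Z ∈ cycleSpace G, ∑ e, Z e * s e = 0 := by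
  obtain ⟨φ₁, hφ₁⟩ := SimpleGraph.AnnihilatesCycles.exists_potential hs₁
  obtain ⟨φ₂, hφ₂⟩ := SimpleGraph.AnnihilatesCycles.exists_potential hs₂
  have hs : G.AnnihilatesCycles (sumEdgeLabel s₁ s₂ φ₁ φ₂) :=
    SimpleGraph.annihilatesCycles_iff_exists_potential.2
      ⟨Sum.elim φ₁ φ₂, fun _ _ => sumEdgeLabel_eq_of_adj hadj₁ hadj₂ hφ₁ hφ₂⟩
  exact ⟨_, sumEdgeLabel_map_inl, sumEdgeLabel_map_inr, fun _ => hs.sum_mul_eq_zero⟩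

/-- Let `G` (on `V₁ ⊕ V₂`) be obtained from vertex-disjoint graphs
`G₁, G₂` by adding `k ≥ 1` edges `e₁, ..., e_k`, each joining a vertex of `G₁`
to a vertex of `G₂`. If labelings `s₁, s₂` annihilate every simple cycle of
`G₁`, resp. `G₂`, then there is an extension `s` of `s₁` and `s₂` to all edges
of `G` such that every element of the cycle space of `G` has `s`-sum `0`. -/
theorem stmt_8 {V₁ V₂ : Type*} [Fintype V₁] [Fintype V₂]
    [DecidableEq V₁] [DecidableEq V₂]
    (G₁ : SimpleGraph V₁) (G₂ : SimpleGraph V₂) (k : ℕ) (hk : 1 ≤ k)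
    (p : Fin k → V₁ × V₂) (hp : Function.Injective p)
    (G : SimpleGraph (V₁ ⊕ V₂))
    (hadj₁ : ∀ a b : V₁, G.Adj (Sum.inl a) (Sum.inl b) ↔ G₁.Adj a b)
    (hadj₂ : ∀ a b : V₂, G.Adj (Sum.inr a) (Sum.inr b) ↔ G₂.Adj a b)
    (hcross : ∀ (a : V₁) (b : V₂),
      G.Adj (Sum.inl a) (Sum.inr b) ↔ ∃ i, p i = (a, b))
    (s₁ : Sym2 V₁ → ZMod 2) (s₂ : Sym2 V₂ → ZMod 2)
    (hs₁ : ∀ (v : V₁) (w : G₁.Walk v v), w.IsCycle →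
      ∑ e ∈ w.edges.toFinset, s₁ e = 0)
    (hs₂ : ∀ (v : V₂) (w : G₂.Walk v v), w.IsCycle →
      ∑ e ∈ w.edges.toFinset, s₂ e = 0) :
    ∃ s : Sym2 (V₁ ⊕ V₂) → ZMod 2,
      (∀ e : Sym2 V₁, s (Sym2.map Sum.inl e) = s₁ e) ∧
      (∀ e : Sym2 V₂, s (Sym2.map Sum.inr e) = s₂ e) ∧
      ∀ Z ∈ cycleSpace G, ∑ e, Z e * s e = 0 :=
  stmt_8_general G₁ G₂ G hadj₁ hadj₂ s₁ s₂ hs₁ hs₂
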